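/- In a finite group G, if x is an element with x^2 = 1 and the proportion of elements squaring to the identity exceeds 3/4, then x lies in the center of G. -/

import Mathlib

/-!
If `g` and `x * g` are both involutions (or trivial), then `x * g = (x * g)⁻¹ = g * x`. More than
three quarters of the elements `g` are involutions, and so are more than three quarters of the
products `x * g`; hence more than half of `G` centralizes `x`, which forces the centralizer of `x`
to be all of `G`.
-/

theorem Set.ncard_add_ncard_le_ncard_inter_add_card {α : Type*} [Finite α] (s t : Set α) :
    s.ncard + t.ncard ≤ (s ∩ t).ncard + Nat.card α := by
  rw [← Set.ncard_inter_add_ncard_union s t]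
  exact Nat.add_le_add_left (Set.ncard_le_card _) _

theorem commute_of_sq_eq_one {G : Type*} [Group G] {a b : G} (ha : a ^ 2 = 1) (hb : b ^ 2 = 1)
    (hab : (a * b) ^ 2 = 1) : Commute a b := by
  rw [sq, mul_eq_one_iff_eq_inv] at ha hb hab
  calc a * b = b⁻¹ * a⁻¹ := by rw [hab, mul_inv_rev]
    _ = b * a := by rw [← ha, ← hb]

theorem Subgroup.eq_top_of_card_lt_two_mul {G : Type*} [Group G] [Finite G] (H : Subgroup G)
    (h : Nat.card G < 2 * Nat.card H) : H = ⊤ := by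
  by_contra hH
  have h2 : 2 ≤ H.index := H.one_lt_index_of_ne_top hH
  have := H.card_mul_index
  nlinarith

open scoped Pointwise in
theorem two_mul_card_sq_eq_one_le_card_centralizer_add_card {G : Type*} [Group G] [Finite G]
    {x : G} (hx : x ^ 2 = 1) :
    2 * Nat.card {g : G // g ^ 2 = 1} ≤ Nat.card (Subgroup.centralizer {x}) + Nat.card G := by
  set S := {g : G | g ^ 2 = 1}
  have hcomm : S ∩ x⁻¹ • S ⊆ Subgroup.centralizer {x} := by
    rintro g ⟨hg, hxg⟩
    rw [← Set.preimage_smul] at hxg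
    exact Subgroup.mem_centralizer_singleton_iff.mpr (commute_of_sq_eq_one hx hg hxg).symm
  calc 2 * Nat.card {g : G // g ^ 2 = 1} = S.ncard + (x⁻¹ • S).ncard := by
        rw [Set.ncard_smul_set, two_mul]; rfl
    _ ≤ (S ∩ x⁻¹ • S).ncard + Nat.card G := S.ncard_add_ncard_le_ncard_inter_add_card _
    _ ≤ Nat.card (Subgroup.centralizer {x}) + Nat.card G := by
      gcongr
      exact Set.ncard_le_ncard hcomm

theorem stmt_3 {G : Type*} [Group G] [Finite G] (x : G) (hx : x ^ 2 = 1)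
    (h : 3 * Nat.card G < 4 * Nat.card {g : G // g ^ 2 = 1}) :
    x ∈ Subgroup.center G := by
  have hbound := two_mul_card_sq_eq_one_le_card_centralizer_add_card hx
  have htop : Subgroup.centralizer {x} = ⊤ :=
    Subgroup.eq_top_of_card_lt_two_mul _ (by omega)
  exact Subgroup.centralizer_eq_top_iff_subset.mp htop rfl
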